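/- Let p_n/q_n = [0; a_1, ..., a_n] and r_m/s_m = [0; b_1, ..., b_m] be continued fraction convergents (with a_i, b_i positive integers, a_n, b_m ≥ 1). If q_n = s_m and q_{n−1} = s_{m−1}, then either m = n and a_j = b_j for all 1 ≤ j ≤ n, or m = n+1 with a_1 ≥ 2 and (b_1, ..., b_{n+1}) = (1, a_1 − 1, a_2, ..., a_n), or m + 1 = n with b_1 ≥ 2 and (a_1, ..., a_{m+1}) = (1, b_1 − 1, b_2, ..., b_m). -/

import Mathlib

/-!
Peel off the last partial quotient. Since `q_{n-2} ∈ [1, q_{n-1}]`, the recursion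
`q_n = a_n q_{n-1} + q_{n-2}` is a Euclidean division of `q_n` by `q_{n-1}` with remainder in
`(0, q_{n-1}]`, so `q_n` and `q_{n-1}` determine `a_n` and `q_{n-2}`. Iterating walks both
expansions down until one of them reaches length one; there `q_0 = 1` forces the other to have
length two with `b_1 = 1`, which is the identity `[0; a_1] = [0; 1, a_1 - 1]`.
-/

/-- Denominators of the convergents of the continued fraction [0; a 1, a 2, ...],
where `a i` is the i-th partial quotient (indexed from 1):
q_0 = 1, q_1 = a_1, q_{n+2} = a_{n+2} q_{n+1} + q_n. -/
def den (a : ℕ → ℤ) : ℕ → ℤ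
  | 0 => 1
  | 1 => a 1
  | n + 2 => a (n + 2) * den a (n + 1) + den a n

theorem Int.eq_and_eq_of_mul_add_eq_mul_add {c d x y q : ℤ} (hx : 0 < x) (hxq : x ≤ q)
    (hy : 0 < y) (hyq : y ≤ q) (h : c * q + x = d * q + y) : c = d ∧ x = y := by
  have hxy : x = y := by
    have hdvd : q ∣ x - y := ⟨d - c, by linarith⟩
    have habs : |x - y| < q := abs_sub_lt_iff.mpr ⟨by linarith, by linarith⟩
    linarith [Int.eq_zero_of_abs_lt_dvd hdvd habs]
  refine ⟨mul_right_cancel₀ (by omega : q ≠ 0) ?_, hxy⟩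
  linarith

section

variable {a b : ℕ → ℤ} {n m : ℕ}

theorem den_zero : den a 0 = 1 := rfl

theorem den_one : den a 1 = a 1 := rfl

theorem den_add_two (k : ℕ) : den a (k + 2) = a (k + 2) * den a (k + 1) + den a k := rfl

theorem one_le_den (ha : ∀ i, 1 ≤ i → i ≤ n → 1 ≤ a i) : ∀ {k}, k ≤ n → 1 ≤ den a k
  | 0, _ => le_rfl
  | 1, hk => ha 1 le_rfl hk
  | k + 2, hk => by
    have hq₁ := one_le_den ha (k := k + 1) (by omega)
    have hq₀ := one_le_den ha (k := k) (by omega)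
    have hak := ha (k + 2) (by omega) hk
    rw [den_add_two]
    nlinarith

theorem den_le_den_succ (ha : ∀ i, 1 ≤ i → i ≤ n → 1 ≤ a i) :
    ∀ {k}, k + 1 ≤ n → den a k ≤ den a (k + 1)
  | 0, hk => ha 1 le_rfl hk
  | k + 1, hk => by
    have hq₁ := one_le_den ha (k := k + 1) (by omega)
    have hq₀ := one_le_den ha (k := k) (by omega)
    have hak := ha (k + 2) (by omega) hk
    rw [den_add_two]
    nlinarith

theorem eq_one_of_den_eq_one (ha : ∀ i, 1 ≤ i → i ≤ n → 1 ≤ a i) {k : ℕ} (hk₁ : 1 ≤ k) (hkn : k ≤ n)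
    (h : den a k = 1) : k = 1 ∧ a 1 = 1 := by
  match k, hk₁ with
  | 1, _ => exact ⟨rfl, h⟩
  | k + 2, _ =>
    have hq₁ := one_le_den ha (k := k + 1) (by omega)
    have hq₀ := one_le_den ha (k := k) (by omega)
    have hak := ha (k + 2) (by omega) hkn
    rw [den_add_two] at h
    nlinarith

theorem eq_and_den_eq_of_den_add_two_eq (ha : ∀ i, 1 ≤ i → i ≤ n + 2 → 1 ≤ a i)
    (hb : ∀ i, 1 ≤ i → i ≤ m + 2 → 1 ≤ b i) (h₂ : den a (n + 2) = den b (m + 2))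
    (h₁ : den a (n + 1) = den b (m + 1)) : a (n + 2) = b (m + 2) ∧ den a n = den b m := by
  rw [den_add_two, den_add_two, h₁] at h₂
  exact Int.eq_and_eq_of_mul_add_eq_mul_add (one_le_den ha (by omega))
    (h₁ ▸ den_le_den_succ ha (by omega)) (one_le_den hb (by omega))
    (den_le_den_succ hb (by omega)) h₂

end

def SameQuotients (a b : ℕ → ℤ) (n : ℕ) : Prop :=
  ∀ j, 1 ≤ j → j ≤ n → a j = b j

/-- The other expansion of the same number: `1 / (a_1 + x) = 1 / (1 + 1 / (a_1 - 1 + x))`. -/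
def SplitsFirstQuotient (a b : ℕ → ℤ) (n : ℕ) : Prop :=
  2 ≤ a 1 ∧ b 1 = 1 ∧ b 2 = a 1 - 1 ∧ ∀ j, 2 ≤ j → j ≤ n → b (j + 1) = a j

theorem SameQuotients.succ {a b : ℕ → ℤ} {n : ℕ} (h : SameQuotients a b n)
    (hlast : a (n + 1) = b (n + 1)) : SameQuotients a b (n + 1) := fun j hj₁ hjn =>
  (Nat.lt_or_eq_of_le hjn).elim (fun hj => h j hj₁ (by omega)) (· ▸ hlast)

theorem SplitsFirstQuotient.succ {a b : ℕ → ℤ} {n : ℕ} (h : SplitsFirstQuotient a b n)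
    (hlast : b (n + 2) = a (n + 1)) : SplitsFirstQuotient a b (n + 1) :=
  ⟨h.1, h.2.1, h.2.2.1, fun j hj₂ hjn =>
    (Nat.lt_or_eq_of_le hjn).elim (fun hj => h.2.2.2 j hj₂ (by omega)) (· ▸ hlast)⟩

theorem splitsFirstQuotient_one_of_den_eq {a b : ℕ → ℤ} {m : ℕ}
    (hb : ∀ i, 1 ≤ i → i ≤ m + 2 → 1 ≤ b i) (h₁ : den a 1 = den b (m + 2))
    (h₀ : den b (m + 1) = 1) : m = 0 ∧ SplitsFirstQuotient a b 1 := by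
  obtain ⟨hm, hb₁⟩ := eq_one_of_den_eq_one hb (by omega) (by omega) h₀
  obtain rfl : m = 0 := by omega
  have hb₂ := hb 2 (by omega) le_rfl
  simp only [den_one, den_add_two, zero_add, hb₁, den_zero] at h₁
  exact ⟨rfl, by omega, hb₁, by omega, fun j _ _ => by omega⟩

theorem den_eq_den_classification {a b : ℕ → ℤ} :
    ∀ {n m : ℕ}, (∀ i, 1 ≤ i → i ≤ n → 1 ≤ a i) → (∀ i, 1 ≤ i → i ≤ m → 1 ≤ b i) →
      1 ≤ n → 1 ≤ m → den a n = den b m → den a (n - 1) = den b (m - 1) →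
      (m = n ∧ SameQuotients a b n) ∨ (m = n + 1 ∧ SplitsFirstQuotient a b n) ∨
        (m + 1 = n ∧ SplitsFirstQuotient b a m)
  | 1, 1, _, _, _, _, h₁, _ => Or.inl ⟨rfl, fun j _ _ => (by omega : j = 1) ▸ h₁⟩
  | 1, m + 2, _, hb, _, _, h₁, h₀ => by
    obtain ⟨rfl, hsplit⟩ := splitsFirstQuotient_one_of_den_eq hb h₁ h₀.symm
    exact Or.inr (Or.inl ⟨rfl, hsplit⟩)
  | n + 2, 1, ha, _, _, _, h₁, h₀ => by
    obtain ⟨rfl, hsplit⟩ := splitsFirstQuotient_one_of_den_eq ha h₁.symm h₀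
    exact Or.inr (Or.inr ⟨rfl, hsplit⟩)
  | n + 2, m + 2, ha, hb, _, _, h₂, h₁ => by
    obtain ⟨hlast, h₀⟩ := eq_and_den_eq_of_den_add_two_eq ha hb h₂ h₁
    rcases den_eq_den_classification (n := n + 1) (m := m + 1)
        (fun i hi₁ hi => ha i hi₁ (by omega)) (fun i hi₁ hi => hb i hi₁ (by omega))
        (by omega) (by omega) h₁ h₀ with ⟨hmn, hsame⟩ | ⟨hmn, hsplit⟩ | ⟨hmn, hsplit⟩
    · obtain rfl : m = n := by omega
      exact Or.inl ⟨rfl, hsame.succ hlast⟩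
    · obtain rfl : m = n + 1 := by omega
      exact Or.inr (Or.inl ⟨rfl, hsplit.succ hlast.symm⟩)
    · obtain rfl : n = m + 1 := by omega
      exact Or.inr (Or.inr ⟨rfl, hsplit.succ hlast⟩)

/-- Hilfssatz 3 (i). -/
theorem hilfssatz3_i (a b : ℕ → ℤ) (n m : ℕ)
    (ha : ∀ i, 1 ≤ i → i ≤ n → 1 ≤ a i) (hb : ∀ i, 1 ≤ i → i ≤ m → 1 ≤ b i)
    (hn : 1 ≤ n) (hm : 1 ≤ m)
    (h1 : den a n = den b m) (h2 : den a (n - 1) = den b (m - 1)) :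
    (m = n ∧ ∀ j, 1 ≤ j → j ≤ n → a j = b j) ∨
    (m = n + 1 ∧ 2 ≤ a 1 ∧ b 1 = 1 ∧ b 2 = a 1 - 1 ∧
      ∀ j, 2 ≤ j → j ≤ n → b (j + 1) = a j) ∨
    (m + 1 = n ∧ 2 ≤ b 1 ∧ a 1 = 1 ∧ a 2 = b 1 - 1 ∧
      ∀ j, 2 ≤ j → j ≤ m → a (j + 1) = b j) :=
  den_eq_den_classification ha hb hn hm h1 h2
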